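/- arXiv:2012.10577 — 3 statements merged into one kernel-verified Lean document; each statement's English description precedes it below -/
import Mathlib

section
/- Let H ∈ C²(ℝ^d) satisfy D²H(p) = ‖D²H(p)‖ · A(p) for all p, where A(p) ≥ λ·I_d (as quadratic forms) for some constant λ > 0. Then for all p, q ∈ ℝ^d, ⟨DH(p) − DH(q), p − q⟩ ≥ λ · |DH(p) − DH(q)| · |p − q|. -/
open scoped RealInnerProductSpace
open AffineMap (hasDerivAt_lineMap lineMap_apply_zero lineMap_apply_one)

/-!
Along the segment `t ↦ q + t • (p - q)` the displacement `DH p - DH q` is the integral of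
`D²H · (p - q)`. The hypothesis turns the pointwise bound `⟪A v, v⟫ ≥ λ ‖v‖²` into
`⟪D²H v, v⟫ ≥ λ ‖D²H‖ ‖v‖²`, so integrating, `⟪DH p - DH q, p - q⟫` dominates
`λ ‖p - q‖² ∫ ‖D²H‖`, while `‖DH p - DH q‖ ≤ ‖p - q‖ ∫ ‖D²H‖`.
-/

theorem ContDiff.gradient {F : Type*} [NormedAddCommGroup F] [InnerProductSpace ℝ F]
    [CompleteSpace F] {f : F → ℝ} {m n : WithTop ℕ∞} (hf : ContDiff ℝ n f)
    (hmn : m + 1 ≤ n) : ContDiff ℝ m (gradient f) :=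
  (InnerProductSpace.toDual ℝ F).symm.contDiff.comp (hf.fderiv_right hmn)

theorem ContinuousLinearMap.mul_opNorm_mul_sq_le_inner {E : Type*} [NormedAddCommGroup E]
    [InnerProductSpace ℝ E] {L B : E →L[ℝ] E} {lam : ℝ} (hL : L = ‖L‖ • B)
    (hB : ∀ v, lam * ‖v‖ ^ 2 ≤ ⟪B v, v⟫) (v : E) :
    lam * (‖L‖ * ‖v‖ ^ 2) ≤ ⟪L v, v⟫ := by
  have hLv : ⟪L v, v⟫ = ‖L‖ * ⟪B v, v⟫ := by
    conv_lhs => rw [hL]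
    rw [smul_apply, real_inner_smul_left]
  rw [hLv, mul_left_comm]
  exact mul_le_mul_of_nonneg_left (hB v) (norm_nonneg L)

section Segment

variable {E F : Type*} [NormedAddCommGroup E] [NormedSpace ℝ E]
  [NormedAddCommGroup F] [NormedSpace ℝ F] {G : E → F}

theorem Differentiable.hasDerivAt_comp_lineMap (hG : Differentiable ℝ G) (p q : E) (t : ℝ) :
    HasDerivAt (fun t => G (AffineMap.lineMap q p t))
      (fderiv ℝ G (AffineMap.lineMap q p t) (p - q)) t :=
  (hG _).hasFDerivAt.comp_hasDerivAt t hasDerivAt_lineMap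

theorem ContDiff.norm_sub_le_integral_norm_fderiv_mul (hG : ContDiff ℝ 1 G) (p q : E) :
    ‖G p - G q‖ ≤ (∫ t in (0 : ℝ)..1, ‖fderiv ℝ G (AffineMap.lineMap q p t)‖) * ‖p - q‖ := by
  have hderiv := (hG.differentiable one_ne_zero).hasDerivAt_comp_lineMap p q
  have hcont :
      Continuous fun t : ℝ => ‖fderiv ℝ G (AffineMap.lineMap q p t)‖ * ‖p - q‖ := by
    have := hG.continuous_fderiv one_ne_zero
    fun_prop
  rw [← intervalIntegral.integral_mul_const]
  simpa only [lineMap_apply_zero, lineMap_apply_one] using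
    norm_sub_le_integral_of_norm_deriv_le_of_le zero_le_one
      (fun t _ => (hderiv t).continuousAt.continuousWithinAt)
      (fun t _ => (hderiv t).differentiableAt.differentiableWithinAt)
      (.of_forall fun t _ => (hderiv t).deriv ▸ ContinuousLinearMap.le_opNorm _ _)
      (hcont.intervalIntegrable 0 1)

end Segment

section InnerProduct

variable {E : Type*} [NormedAddCommGroup E] [InnerProductSpace ℝ E] {G : E → E}

theorem ContDiff.inner_sub_eq_integral_inner_fderiv (hG : ContDiff ℝ 1 G) (p q : E) :
    ⟪G p - G q, p - q⟫ =
      ∫ t in (0 : ℝ)..1, ⟪fderiv ℝ G (AffineMap.lineMap q p t) (p - q), p - q⟫ := by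
  have hderiv (t : ℝ) : HasDerivAt (fun t => ⟪G (AffineMap.lineMap q p t), p - q⟫)
      ⟪fderiv ℝ G (AffineMap.lineMap q p t) (p - q), p - q⟫ t := by
    simpa only [inner_zero_right, zero_add] using
      ((hG.differentiable one_ne_zero).hasDerivAt_comp_lineMap p q t).inner ℝ
        (hasDerivAt_const t (p - q))
  have hcont :
      Continuous fun t : ℝ => ⟪fderiv ℝ G (AffineMap.lineMap q p t) (p - q), p - q⟫ := by
    have := hG.continuous_fderiv one_ne_zero
    fun_prop
  rw [intervalIntegral.integral_eq_sub_of_hasDerivAt (fun t _ => hderiv t)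
    (hcont.intervalIntegrable 0 1)]
  simp only [lineMap_apply_zero, lineMap_apply_one, inner_sub_left]

theorem ContDiff.mul_norm_sub_mul_norm_le_inner_sub (hG : ContDiff ℝ 1 G) {lam : ℝ}
    (hlam : 0 ≤ lam) (hG' : ∀ x v, lam * (‖fderiv ℝ G x‖ * ‖v‖ ^ 2) ≤ ⟪fderiv ℝ G x v, v⟫)
    (p q : E) : lam * (‖G p - G q‖ * ‖p - q‖) ≤ ⟪G p - G q, p - q⟫ := by
  have hGc := hG.continuous_fderiv one_ne_zero
  calc lam * (‖G p - G q‖ * ‖p - q‖)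
      ≤ lam * ((∫ t in (0 : ℝ)..1, ‖fderiv ℝ G (AffineMap.lineMap q p t)‖) * ‖p - q‖
          * ‖p - q‖) := by
        gcongr
        exact hG.norm_sub_le_integral_norm_fderiv_mul p q
    _ = ∫ t in (0 : ℝ)..1, lam * (‖fderiv ℝ G (AffineMap.lineMap q p t)‖ * ‖p - q‖ ^ 2) := by
        rw [intervalIntegral.integral_const_mul, intervalIntegral.integral_mul_const]
        ring
    _ ≤ ∫ t in (0 : ℝ)..1, ⟪fderiv ℝ G (AffineMap.lineMap q p t) (p - q), p - q⟫ :=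
        intervalIntegral.integral_mono_on zero_le_one
          ((by fun_prop : Continuous _).intervalIntegrable 0 1)
          ((by fun_prop : Continuous _).intervalIntegrable 0 1)
          fun t _ => hG' _ _
    _ = ⟪G p - G q, p - q⟫ := (hG.inner_sub_eq_integral_inner_fderiv p q).symm

end InnerProduct

/-- If `H ∈ C²(ℝ^d)` satisfies `D²H(p) = ‖D²H(p)‖ • A p` with `A p ≥ λ·I` as quadratic
forms, then `⟨DH(p) − DH(q), p − q⟩ ≥ λ·|DH(p) − DH(q)|·|p − q|`. -/
theorem stmt_0 {d : ℕ} (H : EuclideanSpace ℝ (Fin d) → ℝ) (hH : ContDiff ℝ 2 H)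
    (lam : ℝ) (hlam : 0 < lam)
    (A : EuclideanSpace ℝ (Fin d) →
      EuclideanSpace ℝ (Fin d) →L[ℝ] EuclideanSpace ℝ (Fin d))
    (hA : ∀ p, fderiv ℝ (gradient H) p = ‖fderiv ℝ (gradient H) p‖ • A p)
    (hAlb : ∀ p v, lam * ‖v‖ ^ 2 ≤ ⟪A p v, v⟫) :
    ∀ p q : EuclideanSpace ℝ (Fin d),
      lam * (‖gradient H p - gradient H q‖ * ‖p - q‖)
        ≤ ⟪gradient H p - gradient H q, p - q⟫ :=
  (hH.gradient le_rfl).mul_norm_sub_mul_norm_le_inner_sub hlam.le fun x =>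
    ContinuousLinearMap.mul_opNorm_mul_sq_le_inner (hA x) (hAlb x)
end

section
/- Let L : ℝ^d → ℝ be strictly convex and superlinear, u₀ : ℝ^d → ℝ Lipschitz, t > s > 0, and x ∈ ℝ^d. Suppose y ∈ ℝ^d minimizes w ↦ u₀(w) + t·L((x−w)/t). Define z = (s/t)·x + (1 − s/t)·y. Then y is the unique minimizer over ℝ^d of w ↦ u₀(w) + s·L((z−w)/s). -/
open Filter

/-!
Along the optimal segment the velocity `s⁻¹ • (z - y) = t⁻¹ • (x - y)` is constant, and
`x - w = (t - s) • t⁻¹ • (x - y) + s • s⁻¹ • (z - w)`. For `w ≠ y` the two velocities differ, so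
strict convexity of `L` (in perspective form) gives
`t L(t⁻¹(x - w)) < (t - s) L(t⁻¹(x - y)) + s L(s⁻¹(z - w))`; adding `u₀ w` and comparing with
the minimality of `y` for the time-`t` problem yields strict minimality for the time-`s` problem.
-/

section

variable {E : Type*} [AddCommGroup E] [Module ℝ E]

theorem StrictConvexOn.add_mul_apply_inv_smul_add_lt {L : E → ℝ}
    (hL : StrictConvexOn ℝ Set.univ L) {a b : ℝ} (ha : 0 < a) (hb : 0 < b) {p q : E}
    (hpq : p ≠ q) :
    (a + b) * L ((a + b)⁻¹ • (a • p + b • q)) < a * L p + b * L q := by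
  have hab : 0 < a + b := add_pos ha hb
  have hcomb : (a + b)⁻¹ • (a • p + b • q) = (a / (a + b)) • p + (b / (a + b)) • q := by
    simp only [smul_add, smul_smul, div_eq_inv_mul]
  have hlt := hL.2 (Set.mem_univ p) (Set.mem_univ q) hpq (div_pos ha hab) (div_pos hb hab)
    (by field_simp)
  rw [← hcomb] at hlt
  calc (a + b) * L ((a + b)⁻¹ • (a • p + b • q))
      < (a + b) * (a / (a + b) * L p + b / (a + b) * L q) := mul_lt_mul_of_pos_left hlt hab
    _ = a * L p + b * L q := by field_simp

variable {s t : ℝ} {x y z : E}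

theorem inv_smul_sub_eq_of_eq_segment (hs : s ≠ 0) (ht : t ≠ 0)
    (hz : z = (s / t) • x + (1 - s / t) • y) :
    s⁻¹ • (z - y) = t⁻¹ • (x - y) := by
  subst hz
  match_scalars <;> field_simp
  all_goals ring

theorem sub_eq_add_of_eq_segment (hs : s ≠ 0) (ht : t ≠ 0)
    (hz : z = (s / t) • x + (1 - s / t) • y) (w : E) :
    x - w = (t - s) • (t⁻¹ • (x - y)) + s • (s⁻¹ • (z - w)) := by
  subst hz
  match_scalars <;> field_simp
  all_goals ring

end

theorem stmt_6_general {d : ℕ} (L : EuclideanSpace ℝ (Fin d) → ℝ)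
    (hconv : StrictConvexOn ℝ Set.univ L)
    (u₀ : EuclideanSpace ℝ (Fin d) → ℝ)
    (s t : ℝ) (hs : 0 < s) (hst : s < t) (x y : EuclideanSpace ℝ (Fin d))
    (hy : ∀ w, u₀ y + t * L (t⁻¹ • (x - y)) ≤ u₀ w + t * L (t⁻¹ • (x - w)))
    (z : EuclideanSpace ℝ (Fin d)) (hz : z = (s / t) • x + (1 - s / t) • y) :
    ∀ w, w ≠ y → u₀ y + s * L (s⁻¹ • (z - y)) < u₀ w + s * L (s⁻¹ • (z - w)) := by
  intro w hw
  have ht : t ≠ 0 := (hs.trans hst).ne'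
  have hvel := inv_smul_sub_eq_of_eq_segment hs.ne' ht hz
  have hne : t⁻¹ • (x - y) ≠ s⁻¹ • (z - w) := by
    rw [← hvel, Ne, smul_right_inj (inv_ne_zero hs.ne'), sub_right_inj]
    exact hw.symm
  have hlt := hconv.add_mul_apply_inv_smul_add_lt (sub_pos.2 hst) hs hne
  rw [sub_add_cancel, ← sub_eq_add_of_eq_segment hs.ne' ht hz] at hlt
  rw [hvel]
  linarith [hy w]

/-- Dynamic programming principle: if `y` minimizes `w ↦ u₀(w) + t·L((x−w)/t)` and
`z = (s/t)x + (1−s/t)y` is an intermediate point of the optimal segment, then `y` is the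
unique minimizer of `w ↦ u₀(w) + s·L((z−w)/s)`. -/
theorem stmt_6 {d : ℕ} (L : EuclideanSpace ℝ (Fin d) → ℝ)
    (hconv : StrictConvexOn ℝ Set.univ L)
    (hsuper : Tendsto (fun q : EuclideanSpace ℝ (Fin d) => L q / ‖q‖)
      (comap norm atTop) atTop)
    (u₀ : EuclideanSpace ℝ (Fin d) → ℝ) (M : NNReal) (hu₀ : LipschitzWith M u₀)
    (s t : ℝ) (hs : 0 < s) (hst : s < t) (x y : EuclideanSpace ℝ (Fin d))
    (hy : ∀ w, u₀ y + t * L (t⁻¹ • (x - y)) ≤ u₀ w + t * L (t⁻¹ • (x - w)))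
    (z : EuclideanSpace ℝ (Fin d)) (hz : z = (s / t) • x + (1 - s / t) • y) :
    ∀ w, w ≠ y → u₀ y + s * L (s⁻¹ • (z - y)) < u₀ w + s * L (s⁻¹ • (z - w)) :=
  stmt_6_general L hconv u₀ s t hs hst x y hy z hz
end

section
/- Let H(p) = |p|^{2k} on ℝ^d for an integer k ≥ 1. Then H satisfies the uniform directional convexity condition with a dimension-independent bound: there exists λ > 0 (depending only on k) such that for all p ≠ q with DH(p) ≠ DH(q), ⟨DH(p) − DH(q), p − q⟩ ≥ λ · |DH(p) − DH(q)| · |p − q|. -/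
open scoped RealInnerProductSpace

/-!
Write `s = 2k - 2` and `V p = ‖p‖ ^ s • p`, so that `DH = 2k • V`. Expanding the inner product,
`⟪V p - V q, p - q⟫ ≥ (‖p‖ ^ s + ‖q‖ ^ s) ‖p - q‖² / 2` because `a ↦ a ^ s` is monotone, while
splitting `V p - V q = ‖p‖ ^ s • (p - q) + (‖p‖ ^ s - ‖q‖ ^ s) • q` and the mean value bound for
`a ^ s` give `‖V p - V q‖ ≤ (s + 1) (‖p‖ ^ s + ‖q‖ ^ s) ‖p - q‖`. Hence `λ = 1 / (2 (s + 1))`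
works in every dimension.
-/

lemma abs_pow_sub_pow_mul_le {a b : ℝ} (ha : 0 ≤ a) (hb : 0 ≤ b) (s : ℕ) :
    |a ^ s - b ^ s| * b ≤ s * (a ^ s + b ^ s) * |a - b| := by
  set M := max a b
  have hM : 0 ≤ M := le_max_of_le_left ha
  have hMb : (s : ℝ) * M ^ (s - 1) * b ≤ s * M ^ s := by
    rcases Nat.eq_zero_or_pos s with rfl | hs
    · simp
    · rw [mul_assoc, ← pow_sub_one_mul hs.ne' M]
      gcongr
      exact le_max_right a b
  have hMs : M ^ s ≤ a ^ s + b ^ s := by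
    rcases max_choice a b with h | h <;> simp only [M, h] <;>
      linarith [pow_nonneg ha s, pow_nonneg hb s]
  calc |a ^ s - b ^ s| * b ≤ |a - b| * s * max |a| |b| ^ (s - 1) * b := by
        gcongr; exact abs_pow_sub_pow_le a b s
    _ = |a - b| * (s * M ^ (s - 1) * b) := by
        rw [abs_of_nonneg ha, abs_of_nonneg hb]; ring
    _ ≤ |a - b| * (s * (a ^ s + b ^ s)) :=
        mul_le_mul_of_nonneg_left (hMb.trans (by gcongr)) (abs_nonneg _)
    _ = s * (a ^ s + b ^ s) * |a - b| := by ring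

section InnerProductSpace

variable {F : Type*} [NormedAddCommGroup F] [InnerProductSpace ℝ F]

lemma norm_pow_smul_sub_pow_smul_le (s : ℕ) (p q : F) :
    ‖‖p‖ ^ s • p - ‖q‖ ^ s • q‖ ≤ (s + 1) * (‖p‖ ^ s + ‖q‖ ^ s) * ‖p - q‖ := by
  have hsplit : ‖p‖ ^ s • p - ‖q‖ ^ s • q = ‖p‖ ^ s • (p - q) + (‖p‖ ^ s - ‖q‖ ^ s) • q := by
    rw [smul_sub, sub_smul]; abel
  have hnorm : |‖p‖ - ‖q‖| ≤ ‖p - q‖ := abs_norm_sub_norm_le p q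
  calc ‖‖p‖ ^ s • p - ‖q‖ ^ s • q‖ ≤ ‖p‖ ^ s * ‖p - q‖ + |‖p‖ ^ s - ‖q‖ ^ s| * ‖q‖ := by
        rw [hsplit]
        refine (norm_add_le _ _).trans_eq ?_
        rw [norm_smul, norm_smul, Real.norm_eq_abs, Real.norm_eq_abs, abs_pow, abs_norm]
    _ ≤ ‖p‖ ^ s * ‖p - q‖ + s * (‖p‖ ^ s + ‖q‖ ^ s) * ‖p - q‖ := by
        grw [abs_pow_sub_pow_mul_le (norm_nonneg p) (norm_nonneg q) s, hnorm]
    _ ≤ (s + 1) * (‖p‖ ^ s + ‖q‖ ^ s) * ‖p - q‖ := by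
        nlinarith [pow_nonneg (norm_nonneg q) s, norm_nonneg (p - q)]

lemma half_mul_le_inner_pow_smul_sub_pow_smul (s : ℕ) (p q : F) :
    (‖p‖ ^ s + ‖q‖ ^ s) * ‖p - q‖ ^ 2 / 2 ≤ ⟪‖p‖ ^ s • p - ‖q‖ ^ s • q, p - q⟫ := by
  set a := ‖p‖
  set b := ‖q‖
  have hinner : ⟪a ^ s • p - b ^ s • q, p - q⟫
      = a ^ s * a ^ 2 + b ^ s * b ^ 2 - (a ^ s + b ^ s) * ⟪p, q⟫ := by
    simp only [inner_sub_left, inner_sub_right, real_inner_smul_left, real_inner_self_eq_norm_sq]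
    rw [real_inner_comm q p]; ring
  have hmono : 0 ≤ (a ^ s - b ^ s) * (a ^ 2 - b ^ 2) := by
    rcases le_total a b with h | h
    · exact mul_nonneg_of_nonpos_of_nonpos
        (sub_nonpos.2 (pow_le_pow_left₀ (norm_nonneg p) h s))
        (sub_nonpos.2 (pow_le_pow_left₀ (norm_nonneg p) h 2))
    · exact mul_nonneg (sub_nonneg.2 (pow_le_pow_left₀ (norm_nonneg q) h s))
        (sub_nonneg.2 (pow_le_pow_left₀ (norm_nonneg q) h 2))
  rw [hinner, norm_sub_sq_real]
  nlinarith [hmono]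

theorem inv_mul_norm_mul_norm_le_inner_pow_smul_sub_pow_smul (s : ℕ) (p q : F) :
    (2 * (s + 1) : ℝ)⁻¹ * (‖‖p‖ ^ s • p - ‖q‖ ^ s • q‖ * ‖p - q‖)
      ≤ ⟪‖p‖ ^ s • p - ‖q‖ ^ s • q, p - q⟫ := by
  refine le_trans ?_ (half_mul_le_inner_pow_smul_sub_pow_smul s p q)
  have hs : (0 : ℝ) < 2 * (s + 1) := by positivity
  rw [inv_mul_le_iff₀ hs]
  calc ‖‖p‖ ^ s • p - ‖q‖ ^ s • q‖ * ‖p - q‖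
      ≤ (s + 1) * (‖p‖ ^ s + ‖q‖ ^ s) * ‖p - q‖ * ‖p - q‖ := by
        gcongr; exact norm_pow_smul_sub_pow_smul_le s p q
    _ = 2 * (s + 1) * ((‖p‖ ^ s + ‖q‖ ^ s) * ‖p - q‖ ^ 2 / 2) := by ring

theorem hasGradientAt_norm_pow_two_mul [CompleteSpace F] (k : ℕ) (p : F) :
    HasGradientAt (fun x : F => ‖x‖ ^ (2 * k)) ((2 * k * ‖p‖ ^ (2 * k - 2) : ℝ) • p) p := by
  have hcomp := (hasDerivAt_pow k (‖p‖ ^ 2)).comp_hasFDerivAt p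
    (hasStrictFDerivAt_norm_sq p).hasFDerivAt
  simp only [Function.comp_def, ← pow_mul] at hcomp
  rw [hasGradientAt_iff_hasFDerivAt]
  refine hcomp.congr_fderiv (ContinuousLinearMap.ext fun y => ?_)
  have hexp : ‖p‖ ^ (2 * k - 2) = ‖p‖ ^ (2 * (k - 1)) := by congr 1; omega
  simp only [InnerProductSpace.toDual_apply_apply, real_inner_smul_left, hexp,
    smul_apply, innerSL_apply_apply, smul_eq_mul]
  ring

end InnerProductSpace

theorem stmt_19_general (k : ℕ) :
    ∃ lam : ℝ, 0 < lam ∧ ∀ (d : ℕ) (p q : EuclideanSpace ℝ (Fin d)), p ≠ q →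
      gradient (fun x : EuclideanSpace ℝ (Fin d) => ‖x‖ ^ (2 * k)) p ≠
        gradient (fun x : EuclideanSpace ℝ (Fin d) => ‖x‖ ^ (2 * k)) q →
      lam * (‖gradient (fun x : EuclideanSpace ℝ (Fin d) => ‖x‖ ^ (2 * k)) p -
              gradient (fun x : EuclideanSpace ℝ (Fin d) => ‖x‖ ^ (2 * k)) q‖ * ‖p - q‖)
        ≤ ⟪gradient (fun x : EuclideanSpace ℝ (Fin d) => ‖x‖ ^ (2 * k)) p -
            gradient (fun x : EuclideanSpace ℝ (Fin d) => ‖x‖ ^ (2 * k)) q, p - q⟫ := by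
  set s := 2 * k - 2
  refine ⟨(2 * (s + 1) : ℝ)⁻¹, by positivity, fun d p q _ _ => ?_⟩
  have hc : (0 : ℝ) ≤ 2 * k := by positivity
  have hdiff : ((2 * k * ‖p‖ ^ s : ℝ) • p) - ((2 * k * ‖q‖ ^ s : ℝ) • q)
      = (2 * k : ℝ) • (‖p‖ ^ s • p - ‖q‖ ^ s • q) := by
    rw [smul_sub, smul_smul, smul_smul]
  rw [(hasGradientAt_norm_pow_two_mul k p).gradient, (hasGradientAt_norm_pow_two_mul k q).gradient,
    hdiff, norm_smul, Real.norm_of_nonneg hc, real_inner_smul_left, mul_assoc, mul_left_comm]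
  exact mul_le_mul_of_nonneg_left
    (inv_mul_norm_mul_norm_le_inner_pow_smul_sub_pow_smul s p q) hc

/-- `H(p) = |p|^{2k}` satisfies the uniform directional convexity condition with a
dimension-independent constant: there is `λ > 0` depending only on `k` such that
`⟨DH(p) − DH(q), p − q⟩ ≥ λ·|DH(p) − DH(q)|·|p − q|` for all `d` and all `p ≠ q`. -/
theorem stmt_19 (k : ℕ) (hk : 1 ≤ k) :
    ∃ lam : ℝ, 0 < lam ∧ ∀ (d : ℕ) (p q : EuclideanSpace ℝ (Fin d)), p ≠ q →
      gradient (fun x : EuclideanSpace ℝ (Fin d) => ‖x‖ ^ (2 * k)) p ≠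
        gradient (fun x : EuclideanSpace ℝ (Fin d) => ‖x‖ ^ (2 * k)) q →
      lam * (‖gradient (fun x : EuclideanSpace ℝ (Fin d) => ‖x‖ ^ (2 * k)) p -
              gradient (fun x : EuclideanSpace ℝ (Fin d) => ‖x‖ ^ (2 * k)) q‖ * ‖p - q‖)
        ≤ ⟪gradient (fun x : EuclideanSpace ℝ (Fin d) => ‖x‖ ^ (2 * k)) p -
            gradient (fun x : EuclideanSpace ℝ (Fin d) => ‖x‖ ^ (2 * k)) q, p - q⟫ :=
  stmt_19_general k
end
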